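/- arXiv:2404.16417 — 3 statements merged into one kernel-verified Lean document; each statement's English description precedes it below -/
import Mathlib

section
/- Let M be a linear map on n×n complex matrices that is trace-preserving and positivity-preserving, and let M' be the map M'(ρ) = Tr(ρ)·Y for a fixed matrix Y with Tr(Y) = 1. If the map M − κ·M' is positivity-preserving for some κ ≥ 0, then for all density matrices ρ, σ we have ‖M(σ − ρ)‖₁ ≤ (1 − κ)·‖σ − ρ‖₁, where ‖·‖₁ denotes the trace norm. -/
open Matrix ComplexOrder

/-- Trace norm `‖A‖₁ = Tr √(Aᴴ A)`. -/
noncomputable def traceNorm {n : Type*} [Fintype n] [DecidableEq n]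
    (A : Matrix n n ℂ) : ℝ :=
  (let hA := Matrix.posSemidef_conjTranspose_mul_self A
   (hA.1.eigenvectorUnitary : Matrix n n ℂ) * diagonal (((↑) : ℝ → ℂ) ∘ (√·) ∘ hA.1.eigenvalues) *
     (star hA.1.eigenvectorUnitary : Matrix n n ℂ)).trace.re

/-- A density matrix: positive semidefinite with trace 1. -/
def IsDensityMatrix {n : Type*} [Fintype n] [DecidableEq n] (ρ : Matrix n n ℂ) : Prop :=
  ρ.PosSemidef ∧ ρ.trace = 1

/-! Since `M'` annihilates the traceless matrix `D = σ - ρ`, `M D = N D` for the positive map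
`N = M - κ M'`, which scales traces by `1 - κ`. Splitting `D = D⁺ - D⁻` gives
`‖N D‖₁ = ‖N D⁺ - N D⁻‖₁ ≤ Tr N D⁺ + Tr N D⁻ = (1 - κ) (Tr D⁺ + Tr D⁻) = (1 - κ) ‖D‖₁`,
where the inequality `‖A - B‖₁ ≤ Tr A + Tr B` for `A, B ⪰ 0` comes from writing
`‖A - B‖₁ = Tr (S (A - B))` with `S = sign (A - B)` and using `-1 ≤ S ≤ 1`. -/

open scoped MatrixOrder

namespace Matrix

variable {𝕜 n : Type*} [RCLike 𝕜] [Fintype n] [DecidableEq n]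

lemma PosSemidef.trace_mul_nonneg {A B : Matrix n n 𝕜} (hA : A.PosSemidef) (hB : B.PosSemidef) :
    0 ≤ (A * B).trace := by
  obtain ⟨C, rfl⟩ := CStarAlgebra.nonneg_iff_eq_star_mul_self.mp hA.nonneg
  rw [mul_assoc, trace_mul_comm, mul_assoc, ← mul_assoc]
  exact (hB.mul_mul_conjTranspose_same C).trace_nonneg

lemma re_trace_mul_le_of_le_one {S A : Matrix n n 𝕜} (hS : S ≤ 1) (hA : A.PosSemidef) :
    RCLike.re (S * A).trace ≤ RCLike.re A.trace := by
  have h := (RCLike.nonneg_iff.mp (PosSemidef.trace_mul_nonneg hS hA)).1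
  rw [sub_mul, one_mul, trace_sub, map_sub] at h
  linarith

lemma IsHermitian.cfc_sign_mul_self {X : Matrix n n 𝕜} (hX : X.IsHermitian) :
    cfc (fun x : ℝ => (SignType.sign x : ℝ)) X * X = CFC.abs X := by
  rw [CFC.abs_eq_cfc_norm X hX]
  nth_rewrite 2 [← cfc_id' ℝ X]
  rw [← cfc_mul _ _ X (X.finite_real_spectrum.continuousOn _)]
  simp only [Real.norm_eq_abs, sign_mul_self]

end Matrix

section TraceNorm

variable {n : Type*} [Fintype n] [DecidableEq n]

lemma traceNorm_eq_re_trace_abs (A : Matrix n n ℂ) : traceNorm A = (CFC.abs A).trace.re := by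
  have hA : (star A * A).PosSemidef := posSemidef_conjTranspose_mul_self A
  rw [traceNorm, CFC.abs, CFC.sqrt_eq_real_sqrt _ hA.nonneg, cfcₙ_eq_cfc, hA.1.cfc_eq,
    IsHermitian.cfc, Unitary.conjStarAlgAut_apply]
  rfl

lemma Matrix.IsHermitian.traceNorm_eq {D : Matrix n n ℂ} (hD : D.IsHermitian) :
    traceNorm D = (D⁺).trace.re + (D⁻).trace.re := by
  rw [traceNorm_eq_re_trace_abs, ← CFC.posPart_add_negPart D hD, trace_add, Complex.add_re]

lemma traceNorm_sub_le {A B : Matrix n n ℂ} (hA : A.PosSemidef) (hB : B.PosSemidef) :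
    traceNorm (A - B) ≤ A.trace.re + B.trace.re := by
  have hX : (A - B).IsHermitian := hA.1.sub hB.1
  have hsign (x : ℝ) : |(SignType.sign x : ℝ)| ≤ 1 := by
    generalize SignType.sign x = s
    cases s <;> norm_num
  set S := cfc (fun x : ℝ => (SignType.sign x : ℝ)) (A - B)
  have hS : S ≤ 1 := cfc_le_one _ _ fun x _ => (abs_le.mp (hsign x)).2
  have hnegS : -S ≤ 1 := by
    rw [← cfc_neg]
    exact cfc_le_one _ _ fun x _ => neg_le.mp (abs_le.mp (hsign x)).1
  calc traceNorm (A - B) = (S * A).trace.re + (-S * B).trace.re := by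
        rw [traceNorm_eq_re_trace_abs, ← hX.cfc_sign_mul_self, mul_sub, trace_sub, neg_mul,
          trace_neg, Complex.sub_re, Complex.neg_re, sub_eq_add_neg]
    _ ≤ A.trace.re + B.trace.re :=
        add_le_add (re_trace_mul_le_of_le_one hS hA) (re_trace_mul_le_of_le_one hnegS hB)

lemma traceNorm_map_le {N : Matrix n n ℂ →ₗ[ℂ] Matrix n n ℂ}
    (hN : ∀ A, A.PosSemidef → (N A).PosSemidef) {c : ℝ} (hNtr : ∀ A, (N A).trace = c * A.trace)
    {D : Matrix n n ℂ} (hD : D.IsHermitian) : traceNorm (N D) ≤ c * traceNorm D := by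
  have hpos : (D⁺).PosSemidef := (CFC.posPart_nonneg D).posSemidef
  have hneg : (D⁻).PosSemidef := (CFC.negPart_nonneg D).posSemidef
  calc traceNorm (N D) = traceNorm (N D⁺ - N D⁻) := by rw [← map_sub, CFC.posPart_sub_negPart D hD]
    _ ≤ (N D⁺).trace.re + (N D⁻).trace.re := traceNorm_sub_le (hN _ hpos) (hN _ hneg)
    _ = c * traceNorm D := by
        rw [hNtr, hNtr, Complex.re_ofReal_mul, Complex.re_ofReal_mul, hD.traceNorm_eq, mul_add]

end TraceNorm

theorem contraction_of_positive_difference_general {n : ℕ}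
    (M M' : Matrix (Fin n) (Fin n) ℂ →ₗ[ℂ] Matrix (Fin n) (Fin n) ℂ)
    (Y : Matrix (Fin n) (Fin n) ℂ) (hY : Y.trace = 1)
    (hM' : ∀ A, M' A = A.trace • Y)
    (hTP : ∀ A, (M A).trace = A.trace)
    (κ : ℝ)
    (hPosDiff : ∀ A, A.PosSemidef → (M A - (κ : ℂ) • M' A).PosSemidef)
    (ρ σ : Matrix (Fin n) (Fin n) ℂ)
    (hρ : IsDensityMatrix ρ) (hσ : IsDensityMatrix σ) :
    traceNorm (M (σ - ρ)) ≤ (1 - κ) * traceNorm (σ - ρ) := by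
  have htrace : (σ - ρ).trace = 0 := by rw [trace_sub, hσ.2, hρ.2, sub_self]
  have hMD : M (σ - ρ) = (M - (κ : ℂ) • M') (σ - ρ) := by simp [hM', htrace]
  rw [hMD]
  refine traceNorm_map_le hPosDiff (fun A => ?_) (hσ.1.1.sub hρ.1.1)
  simp [hTP, hM', hY]
  ring

theorem contraction_of_positive_difference {n : ℕ}
    (M M' : Matrix (Fin n) (Fin n) ℂ →ₗ[ℂ] Matrix (Fin n) (Fin n) ℂ)
    (Y : Matrix (Fin n) (Fin n) ℂ) (hY : Y.trace = 1)
    (hM' : ∀ A, M' A = A.trace • Y)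
    (hTP : ∀ A, (M A).trace = A.trace)
    (hPosM : ∀ A, A.PosSemidef → (M A).PosSemidef)
    (κ : ℝ) (hκ : 0 ≤ κ)
    (hPosDiff : ∀ A, A.PosSemidef → (M A - (κ : ℂ) • M' A).PosSemidef)
    (ρ σ : Matrix (Fin n) (Fin n) ℂ)
    (hρ : IsDensityMatrix ρ) (hσ : IsDensityMatrix σ) :
    traceNorm (M (σ - ρ)) ≤ (1 - κ) * traceNorm (σ - ρ) :=
  contraction_of_positive_difference_general M M' Y hY hM' hTP κ hPosDiff ρ σ hρ hσ
end

section
/- Let y_C, y_k : states → ℝ be measurement probability functions for two classes of a binary classifier satisfying ε-DP: for all states σ, ρ with trace distance at most τ_D, y_C(ρ) ≥ e^{−ε}·y_C(σ) and y_k(ρ) ≤ e^ε·y_k(σ), with y_C, y_k > 0. If y_C(σ) > e^{2ε}·y_k(σ) for a given σ, then for every ρ with trace distance at most τ_D from σ, y_C(ρ) > y_k(ρ). -/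
/-- Certified robustness of an ε-DP binary classifier (abstract form): if the
class probabilities at σ satisfy the multiplicative gap `e^{2ε}`, the prediction
is unchanged within trace distance `τ` of σ. -/
theorem certified_robustness {S : Type*} (dist : S → S → ℝ) (τ ε : ℝ)
    (yC yk : S → ℝ)
    (hyC : ∀ s, 0 < yC s) (hyk : ∀ s, 0 < yk s)
    (σ : S)
    (hDPC : ∀ ρ : S, dist σ ρ ≤ τ → Real.exp (-ε) * yC σ ≤ yC ρ)
    (hDPk : ∀ ρ : S, dist σ ρ ≤ τ → yk ρ ≤ Real.exp ε * yk σ)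
    (hgap : Real.exp (2 * ε) * yk σ < yC σ) :
    ∀ ρ : S, dist σ ρ ≤ τ → yk ρ < yC ρ := by
  intro ρ hρ
  have h1 := hDPC ρ hρ
  have h2 := hDPk ρ hρ
  have : Real.exp ε * yk σ < Real.exp (-ε) * yC σ := by
    have := mul_lt_mul_of_pos_left hgap (Real.exp_pos (-ε))
    calc Real.exp ε * yk σ = Real.exp (-ε) * (Real.exp (2*ε) * yk σ) := by
          rw [← mul_assoc, ← Real.exp_add]; ring_nf
      _ < Real.exp (-ε) * yC σ := this
  linarith
end

section
/- Let y_C, y_k : states → ℝ₊ satisfy the two-sided ε-DP bounds at radius τ: y_C(ρ) ≥ e^{−ε}y_C(σ) and y_k(ρ) ≤ e^{ε}y_k(σ) for all ρ within trace distance τ of σ. If y_C(σ)/y_k(σ) > e^{2ε'} for some ε' ≥ ε, then the prediction is robust: y_C(ρ) > y_k(ρ) for all such ρ. -/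
/-- Strengthened certified robustness: the gap `e^{2ε'}` for any `ε' ≥ ε`
suffices to preserve the prediction of an ε-DP binary classifier. -/
theorem certified_robustness_strengthened {S : Type*} (dist : S → S → ℝ)
    (τ ε ε' : ℝ) (hε' : ε ≤ ε')
    (yC yk : S → ℝ)
    (hyC : ∀ s, 0 < yC s) (hyk : ∀ s, 0 < yk s)
    (σ : S)
    (hDPC : ∀ ρ : S, dist σ ρ ≤ τ → Real.exp (-ε) * yC σ ≤ yC ρ)
    (hDPk : ∀ ρ : S, dist σ ρ ≤ τ → yk ρ ≤ Real.exp ε * yk σ)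
    (hgap : Real.exp (2 * ε') < yC σ / yk σ) :
    ∀ ρ : S, dist σ ρ ≤ τ → yk ρ < yC ρ := by
  intro ρ hρ
  have h1 := hDPC ρ hρ
  have h2 := hDPk ρ hρ
  have hgap' : Real.exp (2 * ε) * yk σ < yC σ := by
    have : Real.exp (2 * ε) ≤ Real.exp (2 * ε') := Real.exp_le_exp.2 (by linarith)
    have := lt_of_le_of_lt this hgap
    calc Real.exp (2 * ε) * yk σ < (yC σ / yk σ) * yk σ := by
          exact mul_lt_mul_of_pos_right this (hyk σ)
      _ = yC σ := div_mul_cancel₀ _ (hyk σ).ne'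
  have key : Real.exp ε * yk σ < Real.exp (-ε) * yC σ := by
    have h := mul_lt_mul_of_pos_left hgap' (Real.exp_pos (-ε))
    calc Real.exp ε * yk σ = Real.exp (-ε) * (Real.exp (2 * ε) * yk σ) := by
          rw [← mul_assoc, ← Real.exp_add]; ring_nf
      _ < Real.exp (-ε) * yC σ := h
  linarith
end
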